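/- Let (q,n) be a Dickson pair with q = p^l and n > 2, and consider the Dickson nearfield setup. Let α, β ∈ F be such that α, β, α+β are all nonzero. If at least two of α, β, α+β lie in the same coset of H in F*, then D(α,β) is the underlying set of a subfield of F, and |D(α,β)| = p^h for some positive integer h dividing l·n. -/
import Mathlib


/-- `(q, n)` is a Dickson pair: `q` is a prime power, every prime divisor of `n`
divides `q - 1`, and if `q ≡ 3 (mod 4)` then `4` does not divide `n`. -/
def IsDicksonPair (q n : ℕ) : Prop :=
  0 < q ∧ 0 < n ∧ (∃ p l : ℕ, Nat.Prime p ∧ 0 < l ∧ q = p ^ l) ∧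
    (∀ p : ℕ, Nat.Prime p → p ∣ n → p ∣ q - 1) ∧ (q % 4 = 3 → ¬ 4 ∣ n)

/-- `[k]_q = 1 + q + q^2 + ⋯ + q^(k-1)`. -/
def dq (q k : ℕ) : ℕ := ∑ i ∈ Finset.range k, q ^ i

/-- `x` lies in the coset `g^([k]_q) • H` where `H = ⟨g^n⟩`. -/
def inCoset {F : Type*} [Field F] (g : F) (q n k : ℕ) (x : F) : Prop :=
  ∃ j : ℕ, x = g ^ dq q k * (g ^ n) ^ j

lemma dq_zero (q : ℕ) : dq q 0 = 0 := by simp [dq]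

lemma dq_succ (q k : ℕ) : dq q (k + 1) = dq q k + q ^ k := by
  simp [dq, Finset.sum_range_succ]

lemma dq_add (q a b : ℕ) : dq q (a + b) = dq q a + q ^ a * dq q b := by
  simp only [dq, Finset.sum_range_add, pow_add, ← Finset.mul_sum]

lemma le_dq (q k : ℕ) (hq : 1 ≤ q) : k ≤ dq q k := by
  induction k with
  | zero => simp [dq]
  | succ k ih =>
    have : 1 ≤ q ^ k := Nat.one_le_pow _ _ hq
    rw [dq_succ]; omega

lemma dq_mul (q r m : ℕ) : dq q (r * m) = dq (q ^ r) m * dq q r := by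
  induction m with
  | zero => simp [dq]
  | succ m ih =>
    have : r * (m + 1) = r * m + r := by ring
    rw [this, dq_add, ih, dq_succ, pow_mul, add_mul]

lemma sub_one_mul_dq (q k : ℕ) (hq : 1 ≤ q) : (q - 1) * dq q k = q ^ k - 1 := by
  induction k with
  | zero => simp [dq]
  | succ k ih =>
    have h1 : 1 ≤ q ^ k := Nat.one_le_pow _ _ hq
    have h2 : q ^ k ≤ q ^ (k + 1) := Nat.pow_le_pow_right hq (Nat.le_succ k)
    have h3 : q ^ (k + 1) = q * q ^ k := by rw [pow_succ]; ring
    rw [dq_succ, Nat.mul_add, ih, Nat.sub_mul, one_mul]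
    omega

lemma dq_modeq (q k : ℕ) (hq : 1 ≤ q) : dq q k ≡ k [MOD q - 1] := by
  induction k with
  | zero => rfl
  | succ k ih =>
    rw [dq_succ]
    have h1 : q ≡ 1 [MOD q - 1] := ((Nat.modEq_iff_dvd' hq).mpr dvd_rfl).symm
    have h2 : q ^ k ≡ 1 [MOD q - 1] := by simpa using h1.pow k
    simpa using ih.add h2

lemma pow_one_add_modeq (c : ℕ) : ∀ i : ℕ, (c + 1) ^ i ≡ 1 + i * c [MOD c ^ 2]
  | 0 => by simpa using Nat.ModEq.refl 1
  | (i + 1) => by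
    have ih := pow_one_add_modeq c i
    have h1 : (c + 1) ^ (i + 1) = (c + 1) ^ i * (c + 1) := pow_succ _ _
    have h2 : (c + 1) ^ i * (c + 1) ≡ (1 + i * c) * (c + 1) [MOD c ^ 2] :=
      ih.mul_right _
    have h3 : (1 + i * c) * (c + 1) = (1 + (i + 1) * c) + (i * c ^ 2) := by ring
    have h4 : (1 + (i + 1) * c) + i * c ^ 2 ≡ (1 + (i + 1) * c) + 0 [MOD c ^ 2] :=
      Nat.ModEq.add_left _ ((Nat.modEq_zero_iff_dvd).mpr (⟨i, (mul_comm _ _)⟩))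
    rw [h1]
    calc (c + 1) ^ i * (c + 1) ≡ (1 + i * c) * (c + 1) [MOD c ^ 2] := h2
      _ = (1 + (i + 1) * c) + i * c ^ 2 := h3
      _ ≡ (1 + (i + 1) * c) + 0 [MOD c ^ 2] := h4
      _ = 1 + (i + 1) * c := by ring

lemma dq_sum_modeq (c : ℕ) : ∀ r : ℕ, dq (c + 1) r ≡ r + (∑ i ∈ Finset.range r, i) * c [MOD c ^ 2]
  | 0 => by simpa [dq] using Nat.ModEq.refl 0
  | (r + 1) => by
    have ih := dq_sum_modeq c r
    rw [dq_succ, Finset.sum_range_succ]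
    calc dq (c+1) r + (c+1) ^ r
        ≡ (r + (∑ i ∈ Finset.range r, i) * c) + (1 + r * c) [MOD c ^ 2] :=
          ih.add (pow_one_add_modeq c r)
      _ = (r + 1) + ((∑ i ∈ Finset.range r, i) + r) * c := by ring

/-- key valuation fact: `[r]_q ≡ r (mod r^2)` -/
lemma dq_prime_modeq (r q : ℕ) (hr : r.Prime) (hq : 2 ≤ q) (hd : r ∣ q - 1)
    (h4 : r = 2 → q % 4 = 1) : dq q r ≡ r [MOD r ^ 2] := by
  set c := q - 1 with hc
  have hq1 : q = c + 1 := by omega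
  have hmain : dq q r ≡ r + (∑ i ∈ Finset.range r, i) * c [MOD c ^ 2] := by
    rw [hq1]; exact dq_sum_modeq c r
  have hr2c2 : r ^ 2 ∣ c ^ 2 := pow_dvd_pow_of_dvd hd 2
  have hmain' : dq q r ≡ r + (∑ i ∈ Finset.range r, i) * c [MOD r ^ 2] :=
    hmain.of_dvd hr2c2
  have hT : r ^ 2 ∣ (∑ i ∈ Finset.range r, i) * c := by
    rcases Nat.Prime.eq_two_or_odd' hr with h2 | hodd
    · subst h2
      have : (∑ i ∈ Finset.range 2, i) = 1 := by decide
      rw [this, one_mul]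
      have := h4 rfl
      have : (4 : ℕ) ∣ c := by omega
      simpa using this
    · -- r odd : r ∣ ∑ i
      have hsum2 : (∑ i ∈ Finset.range r, i) * 2 = r * (r - 1) :=
        Finset.sum_range_id_mul_two r
      have hrdvd : r ∣ (∑ i ∈ Finset.range r, i) := by
        have h1 : r ∣ (∑ i ∈ Finset.range r, i) * 2 := hsum2 ▸ Dvd.intro _ rfl
        have hco : Nat.Coprime r 2 :=
          (Nat.coprime_primes hr Nat.prime_two).mpr
            (by rintro rfl; rw [Nat.odd_iff] at hodd; omega)
        exact Nat.Coprime.dvd_of_dvd_mul_right hco h1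
      calc r ^ 2 = r * r := sq r
        _ ∣ (∑ i ∈ Finset.range r, i) * c := mul_dvd_mul hrdvd hd
  calc dq q r ≡ r + (∑ i ∈ Finset.range r, i) * c [MOD r ^ 2] := hmain'
    _ ≡ r + 0 [MOD r ^ 2] := Nat.ModEq.add_left _ ((Nat.modEq_zero_iff_dvd).mpr hT)
    _ = r := by ring

/-- base case : `r ∣ [k]_q ↔ r ∣ k` whenever `r ∣ q - 1`. -/
lemma dvd_dq_iff_of_dvd_sub_one (r q k : ℕ) (hq : 2 ≤ q) (hd : r ∣ q - 1) :
    (r ∣ dq q k ↔ r ∣ k) := by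
  have h := (dq_modeq q k (by omega)).of_dvd hd
  unfold Nat.ModEq at h
  constructor <;> intro hx <;>
    [rw [Nat.dvd_iff_mod_eq_zero] at hx ⊢; rw [Nat.dvd_iff_mod_eq_zero] at hx ⊢] <;> omega

/-- key lemma (lifting the exponent style) -/
lemma pow_dvd_dq_iff (r : ℕ) (hr : r.Prime) :
    ∀ (a q k : ℕ), 2 ≤ q → r ∣ q - 1 → (r = 2 → q % 4 = 1) →
      (r ^ a ∣ dq q k ↔ r ^ a ∣ k) := by
  intro a
  induction a with
  | zero => intro q k _ _ _; simp
  | succ a ih =>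
    intro q k hq hd h4
    -- the unit decomposition of dq q r
    have hmod := dq_prime_modeq r q hr hq hd h4
    have hler : r ≤ dq q r := le_dq q r (by omega)
    obtain ⟨t, ht⟩ := (Nat.modEq_iff_dvd' hler).mp hmod.symm
    have hdqr : dq q r = r * (1 + r * t) := by
      have h0 : dq q r = r + r ^ 2 * t := by omega
      rw [h0]; ring
    have hnu : ¬ r ∣ (1 + r * t) := by
      intro hdvd
      have h1 : r ∣ r * t := Dvd.intro t rfl
      have : r ∣ 1 := (Nat.dvd_add_right h1).mp (by rwa [add_comm] at hdvd)
      exact hr.one_lt.ne' (Nat.dvd_one.mp this)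
    -- conditions for q^r
    have hq2r : 2 ≤ q ^ r := Nat.one_lt_pow hr.pos.ne' (by omega)
    have hdr : r ∣ q ^ r - 1 := hd.trans (by simpa using Nat.sub_dvd_pow_sub_pow q 1 r)
    have h4r : r = 2 → q ^ r % 4 = 1 := by
      rintro rfl
      obtain ⟨c, hc⟩ := hd
      have hqodd : q % 2 = 1 := by omega
      have hq4 : q % 4 = 1 ∨ q % 4 = 3 := by
        have := Nat.mod_mod_of_dvd q (by norm_num : (2:ℕ) ∣ 4)
        omega
      rcases hq4 with h | h <;> rw [Nat.pow_mod, h] <;> decide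
    have hbase := dvd_dq_iff_of_dvd_sub_one r q k hq hd
    constructor
    · intro h
      have hrk : r ∣ k := hbase.mp ((dvd_pow_self r (Nat.succ_ne_zero a)).trans h)
      obtain ⟨m, rfl⟩ := hrk
      rw [dq_mul, hdqr] at h
      have h' : r ^ (a + 1) ∣ r * (dq (q ^ r) m * (1 + r * t)) := by
        convert h using 1; ring
      rw [pow_succ'] at h'
      have h'' : r ^ a ∣ dq (q ^ r) m * (1 + r * t) :=
        (mul_dvd_mul_iff_left (a := r) hr.pos.ne').mp h'
      have hco : Nat.Coprime (r ^ a) (1 + r * t) :=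
        Nat.Coprime.pow_left _ (hr.coprime_iff_not_dvd.mpr hnu)
      have h3 : r ^ a ∣ dq (q ^ r) m := hco.dvd_of_dvd_mul_right h''
      have h5 : r ^ a ∣ m := (ih (q ^ r) m hq2r hdr h4r).mp h3
      rw [pow_succ']
      exact mul_dvd_mul_left r h5
    · intro h
      have hrk : r ∣ k := (dvd_pow_self r (Nat.succ_ne_zero a)).trans h
      obtain ⟨m, rfl⟩ := hrk
      have hm : r ^ a ∣ m := by
        rw [pow_succ'] at h
        exact (mul_dvd_mul_iff_left (a := r) hr.pos.ne').mp h
      have h3 : r ^ a ∣ dq (q ^ r) m := (ih (q ^ r) m hq2r hdr h4r).mpr hm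
      rw [dq_mul, hdqr, pow_succ]
      exact mul_dvd_mul h3 (Dvd.intro _ rfl)

lemma dvd_dq_iff (q n : ℕ) (hq2 : 2 ≤ q) (hdick : IsDicksonPair q n) (k : ℕ) :
    n ∣ dq q k ↔ n ∣ k := by
  obtain ⟨-, hn0, -, hdvd, h4⟩ := hdick
  rcases Nat.eq_zero_or_pos k with rfl | hk
  · simp [dq_zero]
  have hdq0 : dq q k ≠ 0 := by have := le_dq q k (by omega); omega
  rw [← Nat.factorization_le_iff_dvd hn0.ne' hdq0,
    ← Nat.factorization_le_iff_dvd hn0.ne' hk.ne', Finsupp.le_def, Finsupp.le_def]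
  have key : ∀ r : ℕ, n.factorization r ≤ (dq q k).factorization r ↔
      n.factorization r ≤ k.factorization r := by
    intro r
    set a := n.factorization r with ha
    rcases Nat.eq_zero_or_pos a with ha0 | hapos
    · simp [ha0]
    have hrp : r.Prime := Nat.prime_of_mem_primeFactors
      ((Nat.support_factorization n) ▸ Finsupp.mem_support_iff.mpr (show n.factorization r ≠ 0 by omega))
    have hrn : r ∣ n := Nat.dvd_of_factorization_pos (by omega)
    have hrq : r ∣ q - 1 := hdvd r hrp hrn
    rw [← hrp.pow_dvd_iff_le_factorization hdq0, ← hrp.pow_dvd_iff_le_factorization hk.ne']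
    by_cases hr2 : r = 2
    · subst hr2
      have hqodd : q % 2 = 1 := by obtain ⟨c, hc⟩ := hrq; omega
      have hq4 : q % 4 = 1 ∨ q % 4 = 3 := by
        have := Nat.mod_mod_of_dvd q (by norm_num : (2:ℕ) ∣ 4)
        omega
      rcases hq4 with h | h
      · exact pow_dvd_dq_iff 2 Nat.prime_two a q k hq2 hrq (fun _ => h)
      · -- q ≡ 3 mod 4 : a = 1
        have hno4 : ¬ (4:ℕ) ∣ n := h4 h
        have ha1 : a = 1 := by
          rcases Nat.lt_or_ge a 2 with h' | h'
          · omega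
          · exfalso
            apply hno4
            have : (2:ℕ) ^ 2 ∣ 2 ^ a := pow_dvd_pow 2 h'
            exact (by norm_num : (2:ℕ)^2 = 4) ▸ this.trans (Nat.ordProj_dvd n 2)
        rw [ha1, pow_one]
        exact dvd_dq_iff_of_dvd_sub_one 2 q k hq2 hrq
    · exact pow_dvd_dq_iff r hrp a q k hq2 hrq (fun h => absurd h hr2)
  exact ⟨fun h r => (key r).mp (h r), fun h r => (key r).mpr (h r)⟩

lemma coprime_of_dickson (q n : ℕ) (hq2 : 2 ≤ q) (hdick : IsDicksonPair q n) :
    Nat.Coprime n q := by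
  by_contra hco
  obtain ⟨r, hrp, hrn, hrq⟩ := Nat.Prime.not_coprime_iff_dvd.mp hco
  have h1 : r ∣ q - 1 := hdick.2.2.2.1 r hrp hrn
  have h2 : r ∣ q - (q - 1) := Nat.dvd_sub hrq h1
  have h3 : q - (q - 1) = 1 := by omega
  rw [h3, Nat.dvd_one] at h2
  exact hrp.one_lt.ne' h2

lemma dq_mod_surjective (q n : ℕ) (hq2 : 2 ≤ q) (hn : 0 < n)
    (hdick : IsDicksonPair q n) (j : ℕ) :
    ∃ k : ℕ, 1 ≤ k ∧ k ≤ n ∧ j ≡ dq q k [MOD n] := by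
  haveI : NeZero n := ⟨hn.ne'⟩
  have hco : Nat.Coprime n q := coprime_of_dickson q n hq2 hdick
  set f : Fin n → ZMod n := fun i => ((dq q (i + 1) : ℕ) : ZMod n) with hf
  have hinj : Function.Injective f := by
    have hkey : ∀ i i' : Fin n, (i : ℕ) ≤ i' → f i = f i' → i = i' := by
      intro i i' hle h
      have hsplit : dq q ((i':ℕ) + 1) = dq q ((i:ℕ) + 1) + q ^ ((i:ℕ) + 1) * dq q ((i' : ℕ) - i) := by
        have he : ((i':ℕ) + 1) = ((i:ℕ) + 1) + ((i':ℕ) - i) := by omega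
        rw [he, dq_add]
      simp only [hf] at h
      rw [hsplit, Nat.cast_add] at h
      have h0 : ((q ^ ((i:ℕ)+1) * dq q ((i':ℕ) - i) : ℕ) : ZMod n) = 0 :=
        (left_eq_add).mp h
      have hdvd : n ∣ q ^ ((i:ℕ)+1) * dq q ((i':ℕ) - i) :=
        (ZMod.natCast_eq_zero_iff _ _).mp h0
      have hdq : n ∣ dq q ((i':ℕ) - i) :=
        (Nat.Coprime.pow_right _ hco).dvd_of_dvd_mul_left hdvd
      have hnd : n ∣ (i':ℕ) - i := (dvd_dq_iff q n hq2 hdick _).mp hdq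
      have hz : (i':ℕ) - i = 0 := Nat.eq_zero_of_dvd_of_lt hnd (by omega) |>.symm ▸ rfl
      exact Fin.ext (by omega)
    intro i i' he
    rcases le_total (i:ℕ) (i':ℕ) with h | h
    · exact hkey i i' h he
    · exact (hkey i' i h he.symm).symm
  have hsurj : Function.Surjective f :=
    ((Fintype.bijective_iff_injective_and_card f).mpr
      ⟨hinj, by simp [ZMod.card]⟩).surjective
  obtain ⟨i, hi⟩ := hsurj ((j : ℕ) : ZMod n)
  refine ⟨(i : ℕ) + 1, by omega, by have := i.2; omega, ?_⟩
  exact ((ZMod.natCast_eq_natCast_iff _ _ _).mp hi.symm)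

/-- Dickson nearfield setup with `n > 2`: if at least two of `α`, `β`, `α+β`
(all nonzero) lie in the same `H`-coset, then `D(α,β)` is the underlying set of a
subfield of `F`, of cardinality `p^h` with `h ∣ l·n`. -/
theorem distributiveSet_isSubfield_of_two_in_same_coset {F : Type*} [Field F] [Fintype F]
    (q n p l : ℕ) (hp : Nat.Prime p) (hl : 0 < l) (hq : q = p ^ l)
    (hqn : IsDicksonPair q n) (hn : 2 < n)
    (hcard : Fintype.card F = q ^ n)
    (g : F) (hg : ∀ x : F, x ≠ 0 → ∃ j : ℕ, x = g ^ j)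
    (circ : F → F → F)
    (hcirc0 : ∀ lam : F, circ 0 lam = 0)
    (hcirc : ∀ k : ℕ, 1 ≤ k → k ≤ n → ∀ x : F, inCoset g q n k x →
      ∀ lam : F, circ x lam = x * lam ^ q ^ k)
    (α β : F) (hα : α ≠ 0) (hβ : β ≠ 0) (hαβ : α + β ≠ 0)
    (htwo : ∃ k : ℕ, 1 ≤ k ∧ k ≤ n ∧
      ((inCoset g q n k α ∧ inCoset g q n k β) ∨
        (inCoset g q n k α ∧ inCoset g q n k (α + β)) ∨
        (inCoset g q n k β ∧ inCoset g q n k (α + β)))) :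
    (∃ K : Subfield F,
      (K : Set F) = {lam : F | circ (α + β) lam = circ α lam + circ β lam}) ∧
    ∃ h : ℕ, 0 < h ∧ h ∣ l * n ∧
      {lam : F | circ (α + β) lam = circ α lam + circ β lam}.ncard = p ^ h := by
  have hq2 : 2 ≤ q := by
    rw [hq]; exact Nat.one_lt_pow hl.ne' hp.one_lt
  have hn0 : 0 < n := by omega
  -- g is nonzero
  have hg0 : g ≠ 0 := by
    rintro rfl
    have hone : ∀ x : F, x ≠ 0 → x = 1 := by
      intro x hx
      obtain ⟨j, hj⟩ := hg x hx
      cases j with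
      | zero => simpa using hj
      | succ j => rw [zero_pow (Nat.succ_ne_zero j)] at hj; exact absurd hj hx
    have h1 := hone α hα
    have h2 := hone β hβ
    have h3 := hone (α + β) hαβ
    rw [h1, h2] at h3
    have : (1 : F) = 0 := by linear_combination h3
    exact one_ne_zero this
  have hgpow : g ^ (q ^ n - 1) = 1 := by
    have := FiniteField.pow_card_sub_one_eq_one g hg0
    rwa [hcard] at this
  have hndvd : n ∣ q ^ n - 1 := by
    have h1 : n ∣ dq q n := (dvd_dq_iff q n hq2 hqn n).mpr dvd_rfl
    have h2 : dq q n ∣ q ^ n - 1 := by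
      rw [← sub_one_mul_dq q n (by omega)]; exact Dvd.intro_left _ rfl
    exact h1.trans h2
  -- every nonzero element lies in some coset
  have exists_coset : ∀ x : F, x ≠ 0 → ∃ k : ℕ, 1 ≤ k ∧ k ≤ n ∧ inCoset g q n k x := by
    intro x hx
    obtain ⟨j, hj⟩ := hg x hx
    obtain ⟨k, hk1, hkn, hmod⟩ := dq_mod_surjective q n hq2 hn0 hqn j
    refine ⟨k, hk1, hkn, ?_⟩
    set N := q ^ n - 1 with hN
    have hN1 : 1 ≤ N := by
      have : 2 ≤ q ^ n := le_trans hq2 (Nat.le_self_pow hn0.ne' q)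
      omega
    set J := j + dq q k * N with hJ
    have hxJ : x = g ^ J := by
      rw [hJ, pow_add, ← hj, mul_comm (dq q k) N, pow_mul, hgpow, one_pow, mul_one]
    have hmodJ : J ≡ dq q k [MOD n] := by
      calc J ≡ j + dq q k * 0 [MOD n] :=
            (Nat.ModEq.refl j).add ((Nat.ModEq.refl (dq q k)).mul
              ((Nat.modEq_zero_iff_dvd).mpr hndvd))
        _ = j := by ring
        _ ≡ dq q k [MOD n] := hmod
    have hge : dq q k ≤ J := by
      have : dq q k * 1 ≤ dq q k * N := Nat.mul_le_mul_left _ hN1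
      omega
    obtain ⟨t, ht⟩ := (Nat.modEq_iff_dvd' hge).mp hmodJ.symm
    refine ⟨t, ?_⟩
    have hJt : J = dq q k + n * t := by omega
    rw [hxJ, hJt, pow_add, pow_mul]
  -- characteristic
  have hcardp : Fintype.card F = p ^ (l * n) := by rw [hcard, hq, ← pow_mul]
  have hchar : CharP F p := by
    obtain ⟨c, hcP⟩ := CharP.exists F
    haveI := hcP
    have hcprime : c.Prime := CharP.char_is_prime F c
    obtain ⟨m, -, hm⟩ := FiniteField.card F c
    have hpc : p = c := by
      have h1 : p ∣ c ^ (m : ℕ) := by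
        rw [← hm, hcardp]
        exact dvd_pow_self p (by positivity)
      exact (Nat.prime_dvd_prime_iff_eq hp hcprime).mp (hp.dvd_of_dvd_pow h1)
    rwa [hpc]
  haveI := hchar
  haveI : Fact p.Prime := ⟨hp⟩
  -- reduce D to a Frobenius equalizer set
  set D := {lam : F | circ (α + β) lam = circ α lam + circ β lam} with hDdef
  obtain ⟨a, b, hab⟩ : ∃ a b : ℕ, D = {x : F | x ^ q ^ a = x ^ q ^ b} := by
    obtain ⟨k, hk1, hkn, hcase⟩ := htwo
    rcases hcase with ⟨hA, hB⟩ | ⟨hA, hAB⟩ | ⟨hB, hAB⟩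
    · obtain ⟨m, hm1, hmn, hAB⟩ := exists_coset (α + β) hαβ
      refine ⟨m, k, ?_⟩
      ext lam
      simp only [hDdef, Set.mem_setOf_eq,
        hcirc m hm1 hmn (α + β) hAB lam, hcirc k hk1 hkn α hA lam,
        hcirc k hk1 hkn β hB lam, ← add_mul]
      exact ⟨fun h => mul_left_cancel₀ hαβ h, fun h => by rw [h]⟩
    · obtain ⟨m, hm1, hmn, hBm⟩ := exists_coset β hβ
      refine ⟨k, m, ?_⟩
      ext lam
      simp only [hDdef, Set.mem_setOf_eq,
        hcirc k hk1 hkn (α + β) hAB lam, hcirc k hk1 hkn α hA lam,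
        hcirc m hm1 hmn β hBm lam, add_mul, add_right_inj]
      exact ⟨fun h => mul_left_cancel₀ hβ h, fun h => by rw [h]⟩
    · obtain ⟨m, hm1, hmn, hAm⟩ := exists_coset α hα
      refine ⟨k, m, ?_⟩
      ext lam
      simp only [hDdef, Set.mem_setOf_eq,
        hcirc k hk1 hkn (α + β) hAB lam, hcirc m hm1 hmn α hAm lam,
        hcirc k hk1 hkn β hB lam, add_mul, add_left_inj]
      exact ⟨fun h => mul_left_cancel₀ hα h, fun h => by rw [h]⟩
  -- the subfield
  have hqpow : ∀ s x : F, ∀ c : ℕ, x ^ q ^ c = iterateFrobenius F p (l * c) x := by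
    intro _ x c
    rw [iterateFrobenius_def, hq, ← pow_mul]
  set K : Subfield F :=
    { toSubring := RingHom.eqLocus (iterateFrobenius F p (l * a)) (iterateFrobenius F p (l * b))
      inv_mem' := by
        intro x hx
        have hx' : iterateFrobenius F p (l * a) x = iterateFrobenius F p (l * b) x := hx
        show iterateFrobenius F p (l * a) x⁻¹ = iterateFrobenius F p (l * b) x⁻¹
        rw [map_inv₀, map_inv₀, hx'] } with hK
  have hKD : (K : Set F) = D := by
    ext x
    have : x ∈ K ↔ iterateFrobenius F p (l * a) x = iterateFrobenius F p (l * b) x :=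
      Iff.rfl
    rw [SetLike.mem_coe, this, hab]
    simp only [Set.mem_setOf_eq]
    rw [iterateFrobenius_def, iterateFrobenius_def, hq, ← pow_mul, ← pow_mul]
  refine ⟨⟨K, hKD⟩, ?_⟩
  -- cardinality
  haveI : Fintype K := Fintype.ofFinite K
  haveI : CharP K p := ((K.subtype).charP_iff_charP p).mpr hchar
  obtain ⟨h, -, hKcard⟩ := FiniteField.card K p
  refine ⟨h, h.2, ?_, ?_⟩
  · have hFK : Fintype.card F = Fintype.card K ^ Module.finrank K F :=
      Module.card_eq_pow_finrank
    rw [hcardp, hKcard, ← pow_mul] at hFK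
    have : l * n = (h : ℕ) * Module.finrank K F :=
      Nat.pow_right_injective hp.two_le hFK
    exact ⟨Module.finrank K F, this⟩
  · rw [← hKD, ← Nat.card_coe_set_eq, ← hKcard, ← Nat.card_eq_fintype_card]
    rfl
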